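/- arXiv:2506.06194 — 2 statements merged into one kernel-verified Lean document; each statement's English description precedes it below -/
import Mathlib

section
/- Let n ≥ 2 and m ≥ 1, and fix y ∈ ℝ^m. Then span{Aᵀ J(Ay)ᵀ w : A ∈ ℝ^{n×m}, w ∈ ℝⁿ} = ℝ^m, where J(z) ∈ ℝ^{n×n} denotes the Jacobian of softmax : ℝⁿ → ℝⁿ at z. In fact, for every u ∈ ℝ^m there exist A ∈ ℝ^{n×m} and w ∈ ℝⁿ with Aᵀ J(Ay)ᵀ w = u. -/
open scoped Matrix

/-- `softmax(z)ᵢ = exp(zᵢ) / ∑ⱼ exp(zⱼ)`. -/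
noncomputable def softmaxFun {ι : Type*} [Fintype ι] (z : ι → ℝ) : ι → ℝ :=
  fun i => Real.exp (z i) / ∑ j, Real.exp (z j)

/-- The Jacobian `J(z) = diag(softmax(z)) − softmax(z) softmax(z)ᵀ` of softmax at `z`. -/
noncomputable def softmaxJac (n : ℕ) (z : Fin n → ℝ) : Matrix (Fin n) (Fin n) ℝ :=
  Matrix.diagonal (softmaxFun z) - Matrix.of fun i j => softmaxFun z i * softmaxFun z j

/-!
Take `A = eᵢ uᵀ`, whose only nonzero row is `u`. Then `Aᵀ v = vᵢ u` for every `v`, so with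
`w = c eᵢ` we get `Aᵀ J(Ay)ᵀ w = c J(Ay)ᵢᵢ u`, and `J(z)ᵢᵢ = sᵢ (1 - sᵢ)` with `s = softmax(z)`.
For `n ≥ 2` every `sᵢ` lies strictly between `0` and `1`, so `c = J(Ay)ᵢᵢ⁻¹` gives `u`.
-/

theorem Matrix.transpose_vecMulVec_single_mulVec {m n R : Type*} [Fintype m] [DecidableEq m]
    [CommSemiring R] (i : m) (u : n → R) (v : m → R) :
    (vecMulVec (Pi.single i 1) u)ᵀ *ᵥ v = v i • u := by
  rw [transpose_vecMulVec, vecMulVec_mulVec, op_smul_eq_smul, single_one_dotProduct]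

section Softmax

variable {ι : Type*} [Fintype ι]

theorem softmaxFun_pos (z : ι → ℝ) (i : ι) : 0 < softmaxFun z i :=
  div_pos (Real.exp_pos _) (Finset.sum_pos (fun _ _ => Real.exp_pos _) ⟨i, Finset.mem_univ _⟩)

theorem softmaxFun_lt_one (z : ι → ℝ) {i j : ι} (hji : j ≠ i) : softmaxFun z i < 1 := by
  rw [softmaxFun, div_lt_one (Finset.sum_pos (fun k _ => Real.exp_pos _) ⟨i, Finset.mem_univ _⟩)]
  exact Finset.single_lt_sum hji (Finset.mem_univ _) (Finset.mem_univ _) (Real.exp_pos _)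
    fun k _ _ => (Real.exp_pos _).le

end Softmax

theorem softmaxJac_apply_self (n : ℕ) (z : Fin n → ℝ) (i : Fin n) :
    softmaxJac n z i i = softmaxFun z i * (1 - softmaxFun z i) := by
  simp only [softmaxJac, Matrix.sub_apply, Matrix.diagonal_apply_eq, Matrix.of_apply]
  ring

theorem softmaxJac_apply_self_pos {n : ℕ} (hn : 2 ≤ n) (z : Fin n → ℝ) (i : Fin n) :
    0 < softmaxJac n z i i := by
  obtain ⟨j, hji⟩ := Fintype.exists_ne_of_one_lt_card (by rw [Fintype.card_fin]; omega) i
  rw [softmaxJac_apply_self]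
  exact mul_pos (softmaxFun_pos z i) (sub_pos.2 (softmaxFun_lt_one z hji))

theorem softmax_adjoint_surjective_general
    (n m : ℕ) (hn : 2 ≤ n) (y : Fin m → ℝ) :
    Submodule.span ℝ {u : Fin m → ℝ |
      ∃ (A : Matrix (Fin n) (Fin m) ℝ) (w : Fin n → ℝ),
        u = Aᵀ.mulVec ((softmaxJac n (A.mulVec y))ᵀ.mulVec w)} = ⊤ ∧
    ∀ u : Fin m → ℝ, ∃ (A : Matrix (Fin n) (Fin m) ℝ) (w : Fin n → ℝ),
      Aᵀ.mulVec ((softmaxJac n (A.mulVec y))ᵀ.mulVec w) = u := by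
  have hsurj : ∀ u : Fin m → ℝ, ∃ (A : Matrix (Fin n) (Fin m) ℝ) (w : Fin n → ℝ),
      Aᵀ.mulVec ((softmaxJac n (A.mulVec y))ᵀ.mulVec w) = u := by
    intro u
    let i : Fin n := ⟨0, by omega⟩
    let A := Matrix.vecMulVec (Pi.single i 1) u
    have hJ := (softmaxJac_apply_self_pos hn (A *ᵥ y) i).ne'
    refine ⟨A, (softmaxJac n (A *ᵥ y) i i)⁻¹ • Pi.single i 1, ?_⟩
    rw [Matrix.mulVec_smul, Matrix.mulVec_single_one, Matrix.transpose_vecMulVec_single_mulVec,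
      Pi.smul_apply, Matrix.col_apply, Matrix.transpose_apply, smul_eq_mul, inv_mul_cancel₀ hJ,
      one_smul]
  refine ⟨eq_top_iff.2 fun u _ => Submodule.subset_span ?_, hsurj⟩
  obtain ⟨A, w, h⟩ := hsurj u
  exact ⟨A, w, h.symm⟩

/-- Surjectivity of the adjoint through a final softmax layer: for `n ≥ 2` and any fixed
`y ∈ ℝ^m`, the vectors `Aᵀ J(Ay)ᵀ w` (over all `A ∈ ℝ^{n×m}`, `w ∈ ℝⁿ`) span `ℝ^m`;
in fact every `u ∈ ℝ^m` is exactly of this form. -/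
theorem softmax_adjoint_surjective
    (n m : ℕ) (hn : 2 ≤ n) (hm : 1 ≤ m) (y : Fin m → ℝ) :
    Submodule.span ℝ {u : Fin m → ℝ |
      ∃ (A : Matrix (Fin n) (Fin m) ℝ) (w : Fin n → ℝ),
        u = Aᵀ.mulVec ((softmaxJac n (A.mulVec y))ᵀ.mulVec w)} = ⊤ ∧
    ∀ u : Fin m → ℝ, ∃ (A : Matrix (Fin n) (Fin m) ℝ) (w : Fin n → ℝ),
      Aᵀ.mulVec ((softmaxJac n (A.mulVec y))ᵀ.mulVec w) = u :=
  softmax_adjoint_surjective_general n m hn y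
end

section
/- Let n, m, r ≥ 1 and let ℓ̂ : ℝ^{n×m} → ℝ be differentiable. Define L on ℝ^{n×r} × ℝ^{m×r} by L(U, V) = ℓ̂(U Vᵀ) (the empirical loss of a two-layer linear network, which depends on the parameters only through the product U Vᵀ). Then along any gradient-flow trajectory (U(t), V(t)) of L, the matrix U(t)ᵀ U(t) − V(t)ᵀ V(t) ∈ ℝ^{r×r} is constant in t; equivalently, all the balancedness quantities ⟨u_k, u_l⟩ − ⟨v_k, v_l⟩, 1 ≤ k, l ≤ r, where u_k and v_k denote the columns of U and V, are conserved. -/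
/-!
The loss depends on `(U, V)` only through `U Vᵀ`, which is invariant under
`(U, V) ↦ (U A, V A⁻ᵀ)` for `A ∈ GL(r)`. Infinitesimally, along `s ↦ (U + s U X, V - s V Xᵀ)` the
product changes only at second order (by `-s² U X² Vᵀ`), so the gradient `(G_U, G_V)` of the loss is
orthogonal to `(U X, -V Xᵀ)` for every `X`, i.e. `G_Uᵀ U = Vᵀ G_V`. Along the flow,
`d/dt (UᵀU - VᵀV) = -(G_Uᵀ U + Uᵀ G_U) + (G_Vᵀ V + Vᵀ G_V)`, which vanishes by this identity and its
transpose.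
-/

open scoped Matrix

/-- The matrix `U ∈ ℝ^{n×r}` extracted from the parameter vector of a two-layer linear
network (parameters modeled with a sum index so that `ℝ^{n×r} × ℝ^{m×r}` carries the
Euclidean/Frobenius inner product). -/
noncomputable def Umat (n m r : ℕ)
    (θ : EuclideanSpace ℝ ((Fin n × Fin r) ⊕ (Fin m × Fin r))) :
    Matrix (Fin n) (Fin r) ℝ :=
  Matrix.of fun a k => θ (Sum.inl (a, k))

/-- The matrix `V ∈ ℝ^{m×r}` extracted from the parameter vector. -/
noncomputable def Vmat (n m r : ℕ)
    (θ : EuclideanSpace ℝ ((Fin n × Fin r) ⊕ (Fin m × Fin r))) :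
    Matrix (Fin m) (Fin r) ℝ :=
  Matrix.of fun b k => θ (Sum.inr (b, k))

open scoped InnerProductSpace

theorem Convex.eq_of_forall_hasDerivAt_zero {G : Type*} [NormedAddCommGroup G]
    [NormedSpace ℝ G] {f : ℝ → G} {s : Set ℝ} (hs : Convex ℝ s)
    (hf : ∀ x ∈ s, HasDerivAt f 0 x) {x y : ℝ} (hx : x ∈ s) (hy : y ∈ s) : f x = f y := by
  have h := hs.norm_image_sub_le_of_norm_hasDerivWithin_le (fun z hz => (hf z hz).hasDerivWithinAt)
    (fun _ _ => norm_zero.le) hy hx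
  simpa [sub_eq_zero] using h

theorem inner_gradient_eq_zero_of_hasDerivAt_zero {E : Type*} [NormedAddCommGroup E]
    [InnerProductSpace ℝ E] [CompleteSpace E] {f : E → ℝ} {x v : E}
    (h : HasDerivAt (fun s : ℝ => f (x + s • v)) 0 0) : ⟪gradient f x, v⟫_ℝ = 0 := by
  by_cases hf : DifferentiableAt ℝ f x
  · have hcurve : HasDerivAt (fun s : ℝ => x + s • v) v 0 := by
      simpa using ((hasDerivAt_id (0 : ℝ)).smul_const v).const_add x
    have hline : HasDerivAt (fun s : ℝ => f (x + s • v)) (fderiv ℝ f x v) 0 :=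
      hf.hasFDerivAt.comp_hasDerivAt_of_eq 0 hcurve (by simp)
    rw [gradient, InnerProductSpace.toDual_symm_apply, hline.unique h]
  · simp [gradient_eq_zero_of_not_differentiableAt hf]

theorem DifferentiableAt.hasDerivAt_sub_sq_smul {F : Type*} [NormedAddCommGroup F]
    [NormedSpace ℝ F] {ℓ : F → ℝ} {y : F} (hℓ : DifferentiableAt ℝ ℓ y) (b : F) :
    HasDerivAt (fun s : ℝ => ℓ (y - s ^ 2 • b)) 0 0 := by
  have hcurve : HasDerivAt (fun s : ℝ => y - s ^ 2 • b) 0 0 := by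
    simpa using ((hasDerivAt_pow 2 (0 : ℝ)).smul_const b).const_sub y
  have h := hℓ.hasFDerivAt.comp_hasDerivAt_of_eq 0 hcurve (by simp)
  rwa [map_zero] at h

theorem Matrix.add_smul_mul_transpose_sub_smul {R ι κ ρ : Type*} [CommRing R] [Fintype κ]
    (U : Matrix ι κ R) (V : Matrix ρ κ R) (X : Matrix κ κ R) (s : R) :
    (U + s • (U * X)) * (V - s • (V * Xᵀ))ᵀ = U * Vᵀ - s ^ 2 • (U * X * X * Vᵀ) := by
  simp only [Matrix.transpose_sub, Matrix.transpose_smul, Matrix.transpose_mul,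
    Matrix.transpose_transpose, Matrix.add_mul, Matrix.mul_sub, Matrix.smul_mul, Matrix.mul_smul,
    Matrix.mul_assoc]
  module

theorem Matrix.hasDerivAt_transpose_mul_self_apply {ι κ : Type*} [Fintype ι]
    {A : ℝ → Matrix ι κ ℝ} {A' : Matrix ι κ ℝ} {t : ℝ}
    (hA : ∀ i j, HasDerivAt (fun s => A s i j) (A' i j) t) (k l : κ) :
    HasDerivAt (fun s => ((A s)ᵀ * A s) k l) ((A'ᵀ * A t + (A t)ᵀ * A') k l) t := by
  simp only [Matrix.mul_apply, Matrix.transpose_apply, Matrix.add_apply, ← Finset.sum_add_distrib]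
  exact HasDerivAt.fun_sum fun i _ => (hA i k).mul (hA i l)

section LinearNetwork

variable {n m r : ℕ}

abbrev LinearNetworkParams (n m r : ℕ) := EuclideanSpace ℝ ((Fin n × Fin r) ⊕ (Fin m × Fin r))

noncomputable def paramsOfUV (U : Matrix (Fin n) (Fin r) ℝ) (V : Matrix (Fin m) (Fin r) ℝ) :
    LinearNetworkParams n m r :=
  WithLp.toLp 2 (Sum.elim (fun p => U p.1 p.2) (fun p => V p.1 p.2))

theorem Umat_paramsOfUV (U : Matrix (Fin n) (Fin r) ℝ) (V : Matrix (Fin m) (Fin r) ℝ) :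
    Umat n m r (paramsOfUV U V) = U := rfl

theorem Vmat_paramsOfUV (U : Matrix (Fin n) (Fin r) ℝ) (V : Matrix (Fin m) (Fin r) ℝ) :
    Vmat n m r (paramsOfUV U V) = V := rfl

theorem Umat_add_smul (θ w : LinearNetworkParams n m r) (s : ℝ) :
    Umat n m r (θ + s • w) = Umat n m r θ + s • Umat n m r w := by
  ext; simp [Umat]

theorem Vmat_add_smul (θ w : LinearNetworkParams n m r) (s : ℝ) :
    Vmat n m r (θ + s • w) = Vmat n m r θ + s • Vmat n m r w := by
  ext; simp [Vmat]

theorem inner_paramsOfUV (δ : LinearNetworkParams n m r) (A : Matrix (Fin n) (Fin r) ℝ)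
    (B : Matrix (Fin m) (Fin r) ℝ) :
    ⟪δ, paramsOfUV A B⟫_ℝ = ((Umat n m r δ)ᵀ * A).trace + ((Vmat n m r δ)ᵀ * B).trace := by
  simp only [paramsOfUV, PiLp.inner_apply, RCLike.inner_apply, Real.ringHom_apply,
    Fintype.sum_sum_type, Sum.elim_inl, Sum.elim_inr, Fintype.sum_prod_type, Matrix.trace, Umat,
    Vmat, Matrix.diag_apply, Matrix.mul_apply, Matrix.transpose_apply, Matrix.of_apply]
  congr 1 <;> rw [Finset.sum_comm] <;> simp only [mul_comm]

def IsLinearNetworkLoss (lhat : EuclideanSpace ℝ (Fin n × Fin m) → ℝ)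
    (L : LinearNetworkParams n m r → ℝ) : Prop :=
  ∀ θ, L θ = lhat ((EuclideanSpace.equiv (Fin n × Fin m) ℝ).symm fun p =>
    (Umat n m r θ * (Vmat n m r θ)ᵀ) p.1 p.2)

noncomputable def rescalingDirection (θ : LinearNetworkParams n m r) (X : Matrix (Fin r) (Fin r) ℝ) :
    LinearNetworkParams n m r :=
  paramsOfUV (Umat n m r θ * X) (-(Vmat n m r θ * Xᵀ))

theorem hasDerivAt_loss_along_rescalingDirection
    {lhat : EuclideanSpace ℝ (Fin n × Fin m) → ℝ} (hlhat : Differentiable ℝ lhat)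
    {L : LinearNetworkParams n m r → ℝ} (hL : IsLinearNetworkLoss lhat L)
    (θ : LinearNetworkParams n m r) (X : Matrix (Fin r) (Fin r) ℝ) :
    HasDerivAt (fun s : ℝ => L (θ + s • rescalingDirection θ X)) 0 0 := by
  set U := Umat n m r θ
  set V := Vmat n m r θ
  let e := (EuclideanSpace.equiv (Fin n × Fin m) ℝ).symm
  have hcurve : ∀ s : ℝ, L (θ + s • rescalingDirection θ X) =
      lhat (e (fun p => (U * Vᵀ) p.1 p.2) - s ^ 2 • e (fun p => (U * X * X * Vᵀ) p.1 p.2)) := by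
    intro s
    rw [hL, rescalingDirection, Umat_add_smul, Vmat_add_smul, Umat_paramsOfUV, Vmat_paramsOfUV,
      smul_neg, ← sub_eq_add_neg, Matrix.add_smul_mul_transpose_sub_smul]
    congr 1
  simp_rw [hcurve]
  exact (hlhat _).hasDerivAt_sub_sq_smul _

theorem transpose_Umat_gradient_mul_Umat
    {lhat : EuclideanSpace ℝ (Fin n × Fin m) → ℝ} (hlhat : Differentiable ℝ lhat)
    {L : LinearNetworkParams n m r → ℝ} (hL : IsLinearNetworkLoss lhat L)
    (θ : LinearNetworkParams n m r) :
    (Umat n m r (gradient L θ))ᵀ * Umat n m r θ = (Vmat n m r θ)ᵀ * Vmat n m r (gradient L θ) := by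
  rw [Matrix.ext_iff_trace_mul_right]
  intro X
  have h := inner_gradient_eq_zero_of_hasDerivAt_zero
    (hasDerivAt_loss_along_rescalingDirection hlhat hL θ X)
  rw [rescalingDirection, inner_paramsOfUV, Matrix.mul_neg, Matrix.trace_neg, ← sub_eq_add_neg,
    sub_eq_zero, ← Matrix.trace_transpose ((Vmat n m r (gradient L θ))ᵀ * _)] at h
  simpa only [Matrix.transpose_mul, Matrix.transpose_transpose, Matrix.mul_assoc,
    Matrix.trace_mul_comm X] using h

noncomputable def balancedness (θ : LinearNetworkParams n m r) : Matrix (Fin r) (Fin r) ℝ :=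
  (Umat n m r θ)ᵀ * Umat n m r θ - (Vmat n m r θ)ᵀ * Vmat n m r θ

theorem hasDerivAt_balancedness_apply {θ : ℝ → LinearNetworkParams n m r}
    {δ : LinearNetworkParams n m r} {t : ℝ} (hθ : HasDerivAt θ δ t) (k l : Fin r) :
    HasDerivAt (fun s => balancedness (θ s) k l)
      (((Umat n m r δ)ᵀ * Umat n m r (θ t) + (Umat n m r (θ t))ᵀ * Umat n m r δ
        - ((Vmat n m r δ)ᵀ * Vmat n m r (θ t) + (Vmat n m r (θ t))ᵀ * Vmat n m r δ)) k l) t := by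
  have hcoord : ∀ i, HasDerivAt (fun s => θ s i) (δ i) t :=
    fun i => (PiLp.hasFDerivAt_apply 2 (θ t) i).comp_hasDerivAt t hθ
  exact (Matrix.hasDerivAt_transpose_mul_self_apply (fun a j => hcoord (Sum.inl (a, j))) k l).sub
    (Matrix.hasDerivAt_transpose_mul_self_apply (fun b j => hcoord (Sum.inr (b, j))) k l)

theorem hasDerivAt_balancedness_apply_of_gradient_flow
    {lhat : EuclideanSpace ℝ (Fin n × Fin m) → ℝ} (hlhat : Differentiable ℝ lhat)
    {L : LinearNetworkParams n m r → ℝ} (hL : IsLinearNetworkLoss lhat L)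
    {θ : ℝ → LinearNetworkParams n m r} {t : ℝ} (hθ : HasDerivAt θ (-(gradient L (θ t))) t)
    (k l : Fin r) : HasDerivAt (fun s => balancedness (θ s) k l) 0 t := by
  have hU : Umat n m r (-gradient L (θ t)) = -Umat n m r (gradient L (θ t)) := rfl
  have hV : Vmat n m r (-gradient L (θ t)) = -Vmat n m r (gradient L (θ t)) := rfl
  have hG := transpose_Umat_gradient_mul_Umat hlhat hL (θ t)
  have hG' := congrArg Matrix.transpose hG
  rw [Matrix.transpose_mul, Matrix.transpose_mul, Matrix.transpose_transpose,
    Matrix.transpose_transpose] at hG'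
  convert hasDerivAt_balancedness_apply hθ k l using 1
  rw [hU, hV, Matrix.transpose_neg, Matrix.transpose_neg, Matrix.neg_mul, Matrix.mul_neg,
    Matrix.neg_mul, Matrix.mul_neg, hG, hG']
  simp only [Matrix.sub_apply, Matrix.add_apply, Matrix.neg_apply]
  ring

end LinearNetwork

theorem linear_network_balancedness_conserved_general
    (n m r : ℕ)
    (lhat : EuclideanSpace ℝ (Fin n × Fin m) → ℝ) (hlhat : Differentiable ℝ lhat)
    (L : EuclideanSpace ℝ ((Fin n × Fin r) ⊕ (Fin m × Fin r)) → ℝ)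
    (hL : ∀ θ, L θ = lhat ((EuclideanSpace.equiv (Fin n × Fin m) ℝ).symm fun p =>
      (Umat n m r θ * (Vmat n m r θ)ᵀ) p.1 p.2))
    (I : Set ℝ) (hI : Convex ℝ I)
    (θ : ℝ → EuclideanSpace ℝ ((Fin n × Fin r) ⊕ (Fin m × Fin r)))
    (hflow : ∀ t ∈ I, HasDerivAt θ (-(gradient L (θ t))) t) :
    ∀ s ∈ I, ∀ t ∈ I,
      (Umat n m r (θ s))ᵀ * Umat n m r (θ s) - (Vmat n m r (θ s))ᵀ * Vmat n m r (θ s) =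
      (Umat n m r (θ t))ᵀ * Umat n m r (θ t) - (Vmat n m r (θ t))ᵀ * Vmat n m r (θ t) := by
  intro s hs t ht
  ext k l
  exact hI.eq_of_forall_hasDerivAt_zero (f := fun u => balancedness (θ u) k l)
    (fun u hu => hasDerivAt_balancedness_apply_of_gradient_flow hlhat hL (hflow u hu) k l)
    hs ht

/-- Balancedness conservation for two-layer linear networks: if
`L(U, V) = ℓ̂(U Vᵀ)` with `ℓ̂` differentiable, then `UᵀU − VᵀV` (equivalently all the
quantities `⟨u_k, u_l⟩ − ⟨v_k, v_l⟩` for columns `u_k`, `v_k`) is constant along any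
gradient-flow trajectory `θ'(t) = −∇L(θ(t))`. -/
theorem linear_network_balancedness_conserved
    (n m r : ℕ) (hn : 1 ≤ n) (hm : 1 ≤ m) (hr : 1 ≤ r)
    (lhat : EuclideanSpace ℝ (Fin n × Fin m) → ℝ) (hlhat : Differentiable ℝ lhat)
    (L : EuclideanSpace ℝ ((Fin n × Fin r) ⊕ (Fin m × Fin r)) → ℝ)
    (hL : ∀ θ, L θ = lhat ((EuclideanSpace.equiv (Fin n × Fin m) ℝ).symm fun p =>
      (Umat n m r θ * (Vmat n m r θ)ᵀ) p.1 p.2))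
    (I : Set ℝ) (hI : Convex ℝ I)
    (θ : ℝ → EuclideanSpace ℝ ((Fin n × Fin r) ⊕ (Fin m × Fin r)))
    (hflow : ∀ t ∈ I, HasDerivAt θ (-(gradient L (θ t))) t) :
    ∀ s ∈ I, ∀ t ∈ I,
      (Umat n m r (θ s))ᵀ * Umat n m r (θ s) - (Vmat n m r (θ s))ᵀ * Vmat n m r (θ s) =
      (Umat n m r (θ t))ᵀ * Umat n m r (θ t) - (Vmat n m r (θ t))ᵀ * Vmat n m r (θ t) :=
  linear_network_balancedness_conserved_general n m r lhat hlhat L hL I hI θ hflow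
end
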